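/- Let Γ be a special torsion-free affine connection on U, let f be a smooth function on U, set Υ_a = ∂_a f, and let Γ̂ be the connection projectively equivalent to Γ via Υ. Then the Cotton–York tensors of Γ and Γ̂ are related by Ŷ_{abc} = Y_{abc} + ½ W_{ab}{}^d{}_c Υ_d on U (sum over d), where W is the (common) projective Weyl tensor. -/

import Mathlib

open scoped BigOperators

/-!  Common setup: we work on open subsets `U` of `ℝⁿ` (modelled as `Fin n → ℝ`).
A torsion-free affine connection is recorded through its Christoffel symbols
`Γ x a b c = Γ_a{}^b{}_c`, symmetric in `a, c`.  `pd F a x` is the partial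
derivative `∂_a F (x)`. -/

/-- Partial derivative `∂_a F` at `x`. -/
noncomputable def pd {n : ℕ} (F : (Fin n → ℝ) → ℝ) (a : Fin n) (x : Fin n → ℝ) : ℝ :=
  fderiv ℝ F x (Pi.single a 1)

/-- Kronecker delta. -/
def kron {n : ℕ} (a b : Fin n) : ℝ := if a = b then 1 else 0

/-- Curvature tensor `ρ_{ab}{}^c{}_d` of a connection with Christoffel symbols
`Γ x a b c = Γ_a{}^b{}_c`. -/
noncomputable def curv {n : ℕ} (Γ : (Fin n → ℝ) → Fin n → Fin n → Fin n → ℝ)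
    (x : Fin n → ℝ) (a b c d : Fin n) : ℝ :=
  pd (fun y => Γ y b c d) a x - pd (fun y => Γ y a c d) b x
    + ∑ e, Γ x a c e * Γ x b e d - ∑ e, Γ x b c e * Γ x a e d

/-- Ricci tensor `Ric_{ad} = ρ_{ba}{}^b{}_d`. -/
noncomputable def ricci {n : ℕ} (Γ : (Fin n → ℝ) → Fin n → Fin n → Fin n → ℝ)
    (x : Fin n → ℝ) (a d : Fin n) : ℝ :=
  ∑ b, curv Γ x b a b d

/-- Projective Schouten tensor `P_{ab} = Ric_{ab}/(n-1)`. -/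
noncomputable def projP {n : ℕ} (Γ : (Fin n → ℝ) → Fin n → Fin n → Fin n → ℝ)
    (x : Fin n → ℝ) (a b : Fin n) : ℝ :=
  ricci Γ x a b / ((n : ℝ) - 1)

/-- Projective Weyl tensor `W_{ab}{}^c{}_d = ρ_{ab}{}^c{}_d - δ_a{}^c P_{bd} + δ_b{}^c P_{ad}`. -/
noncomputable def projW {n : ℕ} (Γ : (Fin n → ℝ) → Fin n → Fin n → Fin n → ℝ)
    (x : Fin n → ℝ) (a b c d : Fin n) : ℝ :=
  curv Γ x a b c d - kron a c * projP Γ x b d + kron b c * projP Γ x a d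

/-- Covariant derivative `∇_a P_{bc}` of the projective Schouten tensor. -/
noncomputable def nablaP {n : ℕ} (Γ : (Fin n → ℝ) → Fin n → Fin n → Fin n → ℝ)
    (x : Fin n → ℝ) (a b c : Fin n) : ℝ :=
  pd (fun y => projP Γ y b c) a x - ∑ d, Γ x a d b * projP Γ x d c
    - ∑ d, Γ x a d c * projP Γ x b d

/-- Cotton–York tensor `Y_{abc} = ½(∇_a P_{bc} - ∇_b P_{ac})`. -/
noncomputable def cottonY {n : ℕ} (Γ : (Fin n → ℝ) → Fin n → Fin n → Fin n → ℝ)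
    (x : Fin n → ℝ) (a b c : Fin n) : ℝ :=
  (nablaP Γ x a b c - nablaP Γ x b a c) / 2

/-- Covariant derivative `∇_a σ^{bc}` of a contravariant symmetric 2-tensor field. -/
noncomputable def nablaSig {n : ℕ} (Γ : (Fin n → ℝ) → Fin n → Fin n → Fin n → ℝ)
    (σ : (Fin n → ℝ) → Fin n → Fin n → ℝ) (x : Fin n → ℝ) (a b c : Fin n) : ℝ :=
  pd (fun y => σ y b c) a x + ∑ d, Γ x a b d * σ x d c + ∑ d, Γ x a c d * σ x b d

/-- Covariant derivative `∇_a μ^b` of a vector field. -/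
noncomputable def nablaVec {n : ℕ} (Γ : (Fin n → ℝ) → Fin n → Fin n → Fin n → ℝ)
    (μ : (Fin n → ℝ) → Fin n → ℝ) (x : Fin n → ℝ) (a b : Fin n) : ℝ :=
  pd (fun y => μ y b) a x + ∑ c, Γ x a b c * μ x c

/-! ### Auxiliary development -/

section toolkit
variable {n : ℕ} {U : Set (Fin n → ℝ)} {x : Fin n → ℝ} {F G : (Fin n → ℝ) → ℝ}

lemma pd_congr (hU : IsOpen U) (hx : x ∈ U) (h : ∀ y ∈ U, F y = G y) (a : Fin n) :
    pd F a x = pd G a x := by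
  unfold pd
  rw [Filter.EventuallyEq.fderiv_eq ?_]
  filter_upwards [hU.mem_nhds hx] with y hy using h y hy

lemma pd_add (hF : DifferentiableAt ℝ F x) (hG : DifferentiableAt ℝ G x) (a : Fin n) :
    pd (fun y => F y + G y) a x = pd F a x + pd G a x := by
  simp [pd, fderiv_fun_add hF hG]

lemma pd_sub (hF : DifferentiableAt ℝ F x) (hG : DifferentiableAt ℝ G x) (a : Fin n) :
    pd (fun y => F y - G y) a x = pd F a x - pd G a x := by
  simp [pd, fderiv_fun_sub hF hG]

lemma pd_mul (hF : DifferentiableAt ℝ F x) (hG : DifferentiableAt ℝ G x) (a : Fin n) :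
    pd (fun y => F y * G y) a x = pd F a x * G x + F x * pd G a x := by
  simp [pd, fderiv_fun_mul hF hG]; ring

lemma pd_const_mul (hF : DifferentiableAt ℝ F x) (c : ℝ) (a : Fin n) :
    pd (fun y => c * F y) a x = c * pd F a x := by
  simp [pd, fderiv_const_mul hF]

lemma pd_mul_const (hF : DifferentiableAt ℝ F x) (c : ℝ) (a : Fin n) :
    pd (fun y => F y * c) a x = pd F a x * c := by
  simp [pd, fderiv_mul_const hF]; ring

lemma pd_sum {ι : Type*} {s : Finset ι} {A : ι → (Fin n → ℝ) → ℝ}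
    (h : ∀ i ∈ s, DifferentiableAt ℝ (A i) x) (a : Fin n) :
    pd (fun y => ∑ i ∈ s, A i y) a x = ∑ i ∈ s, pd (A i) a x := by
  simp [pd, fderiv_fun_sum h]

lemma contDiffOn_pd (hU : IsOpen U) (hF : ContDiffOn ℝ (⊤ : ℕ∞) F U) (a : Fin n) :
    ContDiffOn ℝ (⊤ : ℕ∞) (fun y => pd F a y) U :=
  (hF.fderiv_of_isOpen hU (by simp)).clm_apply contDiffOn_const

lemma diffAt {E : Type*} [NormedAddCommGroup E] [NormedSpace ℝ E]
    {F : (Fin n → ℝ) → E} (hU : IsOpen U) (hF : ContDiffOn ℝ (⊤ : ℕ∞) F U) (hx : x ∈ U) :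
    DifferentiableAt ℝ F x :=
  (hF.contDiffAt (hU.mem_nhds hx)).differentiableAt (by simp)

lemma pd_comm (hU : IsOpen U) (hF : ContDiffOn ℝ (⊤ : ℕ∞) F U) (hx : x ∈ U) (a b : Fin n) :
    pd (fun y => pd F b y) a x = pd (fun y => pd F a y) b x := by
  have hd : DifferentiableAt ℝ (fderiv ℝ F) x :=
    diffAt hU (hF.fderiv_of_isOpen hU (by simp)) hx
  have key : ∀ v w : Fin n → ℝ,
      fderiv ℝ (fun y => fderiv ℝ F y w) x v = fderiv ℝ (fderiv ℝ F) x v w := by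
    intro v w
    rw [fderiv_clm_apply hd (differentiableAt_const _)]
    simp
  have hsym : IsSymmSndFDerivAt ℝ F x := by
    refine (hF.contDiffAt (hU.mem_nhds hx)).isSymmSndFDerivAt ?_
    rw [minSmoothness_of_isRCLikeNormedField]
    exact WithTop.coe_le_coe.mpr le_top
  unfold pd
  rw [key, key, hsym]

end toolkit

section kronalg
variable {n : ℕ}

lemma kron_diag (a : Fin n) : kron a a = (1:ℝ) := by simp [kron]

lemma sum_kron_left (X : Fin n → ℝ) (a : Fin n) : ∑ d, kron a d * X d = X a := by
  simp [kron]

lemma sum_mul_kron (X : Fin n → ℝ) (a : Fin n) : ∑ d, X d * kron a d = X a := by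
  simp [kron]

lemma sum_mul_kron' (X : Fin n → ℝ) (a : Fin n) : ∑ d, X d * kron d a = X a := by
  simp [kron]

lemma sum_kron_kron (c d : Fin n) : ∑ e, kron e c * kron d e = kron d c := by
  simp [kron]

lemma quad (A B u : Fin n → ℝ) (s t : ℝ) (a b c d : Fin n) :
    ∑ e, (A e + s * kron e c + kron a c * u e) * (B e + t * kron d e + kron b e * u d)
    = (∑ e, A e * B e) + A d * t + A b * u d + B c * s + s * t * kron d c + s * u d * kron b c
      + kron a c * (∑ e, u e * B e) + kron a c * (u d * t) + kron a c * (u b * u d) := by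
  have h : ∀ e, (A e + s * kron e c + kron a c * u e) * (B e + t * kron d e + kron b e * u d)
      = A e * B e + (A e * kron d e) * t + (A e * kron b e) * u d + (B e * kron e c) * s
        + (kron e c * kron d e) * (s * t) + (kron e c * kron b e) * (s * u d)
        + (u e * B e) * kron a c + (u e * kron d e) * (kron a c * t)
        + (u e * kron b e) * (kron a c * u d) := fun e => by ring
  rw [Finset.sum_congr rfl fun e _ => h e]
  simp only [Finset.sum_add_distrib, ← Finset.sum_mul]
  rw [sum_mul_kron A d, sum_mul_kron A b, sum_mul_kron' B c, sum_kron_kron c d,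
    sum_kron_kron c b, sum_mul_kron u d, sum_mul_kron u b]
  ring

lemma lin (A Q : Fin n → ℝ) (s t : ℝ) (a b : Fin n) :
    ∑ d, (A d + s * kron b d + kron a d * t) * Q d
      = (∑ d, A d * Q d) + s * Q b + t * Q a := by
  have h : ∀ d, (A d + s * kron b d + kron a d * t) * Q d
      = A d * Q d + (kron b d * Q d) * s + (kron a d * Q d) * t := fun d => by ring
  rw [Finset.sum_congr rfl fun d _ => h d]
  simp only [Finset.sum_add_distrib, ← Finset.sum_mul]
  rw [sum_kron_left Q b, sum_kron_left Q a]
  ring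

lemma key_algebra (G : Fin n → Fin n → Fin n → ℝ)
    (dG : Fin n → Fin n → Fin n → Fin n → ℝ) (u : Fin n → ℝ)
    (v : Fin n → Fin n → ℝ) (w : Fin n → Fin n → Fin n → ℝ)
    (P T : Fin n → Fin n → ℝ) (dT : Fin n → Fin n → Fin n → ℝ)
    (hG : ∀ p q r, G p q r = G r q p) (hv : ∀ p q, v p q = v q p)
    (hw : ∀ p q r, w p q r = w q p r) (hP : ∀ p q, P p q = P q p)
    (hT : ∀ p q, T p q = v p q - (∑ e, u e * G p e q) - u p * u q)
    (hdT : ∀ p q r, dT p q r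
      = w p q r - (∑ e, (v p e * G q e r + u e * dG p q e r)) - (v p q * u r + u q * v p r))
    (a b c : Fin n) :
    (- dT a b c + dT b a c)
    + ((∑ d, G a d b * T d c) - (∑ d, G b d a * T d c))
    + ((∑ d, G a d c * T b d) - (∑ d, G b d c * T a d))
    - u a * (P b c - T b c) + u b * (P a c - T a c)
    - u c * ((P b a - T b a) - (P a b - T a b))
    = ∑ d, (dG a b d c - dG b a d c + (∑ e, G a d e * G b e c) - (∑ e, G b d e * G a e c)
        - kron a d * P b c + kron b d * P a c) * u d := by
  have hRHS : ∑ d, (dG a b d c - dG b a d c + (∑ e, G a d e * G b e c)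
        - (∑ e, G b d e * G a e c) - kron a d * P b c + kron b d * P a c) * u d
      = (∑ d, u d * dG a b d c) - (∑ d, u d * dG b a d c)
        + (∑ d, ∑ e, G a d e * G b e c * u d) - (∑ d, ∑ e, G b d e * G a e c * u d)
        - (∑ d, kron a d * (P b c * u d)) + (∑ d, kron b d * (P a c * u d)) := by
    calc ∑ d, (dG a b d c - dG b a d c + (∑ e, G a d e * G b e c)
          - (∑ e, G b d e * G a e c) - kron a d * P b c + kron b d * P a c) * u d
        = ∑ d, (u d * dG a b d c - u d * dG b a d c + (∑ e, G a d e * G b e c * u d)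
            - (∑ e, G b d e * G a e c * u d) - kron a d * (P b c * u d)
            + kron b d * (P a c * u d)) :=
          Finset.sum_congr rfl fun d _ => by rw [← Finset.sum_mul, ← Finset.sum_mul]; ring
      _ = _ := by simp only [Finset.sum_add_distrib, Finset.sum_sub_distrib]
  rw [hRHS, sum_kron_left (fun d => P b c * u d) a, sum_kron_left (fun d => P a c * u d) b]
  simp only [hdT, hT]
  have hcancel : ∑ d, G b d a * (v d c - (∑ e, u e * G d e c) - u d * u c)
      = ∑ d, G a d b * (v d c - (∑ e, u e * G d e c) - u d * u c) :=
    Finset.sum_congr rfl fun d _ => by rw [hG b d a]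
  have h2 : ∑ d, G a d c * (v b d - (∑ e, u e * G b e d) - u b * u d)
      = (∑ d, G a d c * v b d) - (∑ d, ∑ e, G a d c * (u e * G b e d))
        - (∑ d, G a d c * (u b * u d)) := by
    calc ∑ d, G a d c * (v b d - (∑ e, u e * G b e d) - u b * u d)
        = ∑ d, (G a d c * v b d - (∑ e, G a d c * (u e * G b e d)) - G a d c * (u b * u d)) :=
          Finset.sum_congr rfl fun d _ => by rw [mul_sub, mul_sub, Finset.mul_sum]
      _ = _ := by simp only [Finset.sum_sub_distrib]
  have h3 : ∑ d, G b d c * (v a d - (∑ e, u e * G a e d) - u a * u d)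
      = (∑ d, G b d c * v a d) - (∑ d, ∑ e, G b d c * (u e * G a e d))
        - (∑ d, G b d c * (u a * u d)) := by
    calc ∑ d, G b d c * (v a d - (∑ e, u e * G a e d) - u a * u d)
        = ∑ d, (G b d c * v a d - (∑ e, G b d c * (u e * G a e d)) - G b d c * (u a * u d)) :=
          Finset.sum_congr rfl fun d _ => by rw [mul_sub, mul_sub, Finset.mul_sum]
      _ = _ := by simp only [Finset.sum_sub_distrib]
  have swap1 : (∑ d, ∑ e, G a d e * G b e c * u d) = ∑ d, ∑ e, G b d c * (u e * G a e d) := by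
    rw [Finset.sum_comm]
    exact Finset.sum_congr rfl fun d _ => Finset.sum_congr rfl fun e _ => by ring
  have swap2 : (∑ d, ∑ e, G b d e * G a e c * u d) = ∑ d, ∑ e, G a d c * (u e * G b e d) := by
    rw [Finset.sum_comm]
    exact Finset.sum_congr rfl fun d _ => Finset.sum_congr rfl fun e _ => by ring
  have hsplit : ∑ e, (v a e * G b e c + u e * dG a b e c)
      = (∑ e, v a e * G b e c) + (∑ e, u e * dG a b e c) := Finset.sum_add_distrib
  have hsplit' : ∑ e, (v b e * G a e c + u e * dG b a e c)
      = (∑ e, v b e * G a e c) + (∑ e, u e * dG b a e c) := Finset.sum_add_distrib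
  have m1 : (∑ d, G b d c * v a d) = ∑ e, v a e * G b e c :=
    Finset.sum_congr rfl fun d _ => mul_comm _ _
  have m2 : (∑ d, G a d c * v b d) = ∑ e, v b e * G a e c :=
    Finset.sum_congr rfl fun d _ => mul_comm _ _
  have m3 : (∑ d, G a d c * (u b * u d)) = u b * ∑ e, u e * G a e c := by
    rw [Finset.mul_sum]; exact Finset.sum_congr rfl fun d _ => by ring
  have m4 : (∑ d, G b d c * (u a * u d)) = u a * ∑ e, u e * G b e c := by
    rw [Finset.mul_sum]; exact Finset.sum_congr rfl fun d _ => by ring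
  have m5 : (∑ e, u e * G b e a) = ∑ e, u e * G a e b :=
    Finset.sum_congr rfl fun e _ => by rw [hG b e a]
  rw [hcancel, h2, h3, swap1, swap2, hsplit, hsplit', m1, m2, m3, m4, m5,
    hv a b, hw a b c, hP b a]
  ring

end kronalg

/-- `T_{bc} = ∇_b Υ_c - Υ_b Υ_c` where `Υ = df`. -/
noncomputable def Tt {n : ℕ} (Γ : (Fin n → ℝ) → Fin n → Fin n → Fin n → ℝ)
    (f : (Fin n → ℝ) → ℝ) (y : Fin n → ℝ) (b c : Fin n) : ℝ :=
  pd (fun z => pd f c z) b y - (∑ e, pd f e y * Γ y b e c) - pd f b y * pd f c y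

section main
variable {n : ℕ} {U : Set (Fin n → ℝ)}
  {Γ Γhat : (Fin n → ℝ) → Fin n → Fin n → Fin n → ℝ}
  {f e : (Fin n → ℝ) → ℝ}

lemma contDiffOn_Tt (hU : IsOpen U) (hΓsm : ∀ a b c, ContDiffOn ℝ (⊤ : ℕ∞) (fun x => Γ x a b c) U)
    (hf : ContDiffOn ℝ (⊤ : ℕ∞) f U) (b c : Fin n) :
    ContDiffOn ℝ (⊤ : ℕ∞) (fun y => Tt Γ f y b c) U := by
  simp only [Tt]
  exact ((contDiffOn_pd hU (contDiffOn_pd hU hf c) b).sub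
    (ContDiffOn.sum fun i _ => (contDiffOn_pd hU hf i).mul (hΓsm b i c))).sub
    ((contDiffOn_pd hU hf b).mul (contDiffOn_pd hU hf c))

lemma contDiffOn_curv (hU : IsOpen U) (hΓsm : ∀ a b c, ContDiffOn ℝ (⊤ : ℕ∞) (fun x => Γ x a b c) U)
    (a b c d : Fin n) : ContDiffOn ℝ (⊤ : ℕ∞) (fun y => curv Γ y a b c d) U := by
  simp only [curv]
  exact (((contDiffOn_pd hU (hΓsm b c d) a).sub (contDiffOn_pd hU (hΓsm a c d) b)).add
    (ContDiffOn.sum fun i _ => (hΓsm a c i).mul (hΓsm b i d))).sub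
    (ContDiffOn.sum fun i _ => (hΓsm b c i).mul (hΓsm a i d))

lemma contDiffOn_projP (hU : IsOpen U) (hΓsm : ∀ a b c, ContDiffOn ℝ (⊤ : ℕ∞) (fun x => Γ x a b c) U)
    (a b : Fin n) : ContDiffOn ℝ (⊤ : ℕ∞) (fun y => projP Γ y a b) U := by
  simp only [projP, ricci]
  exact ContDiffOn.div_const (ContDiffOn.sum fun i _ => contDiffOn_curv hU hΓsm i a i b) _

end main
section main2
variable {n : ℕ} {U : Set (Fin n → ℝ)}
  {Γ Γhat : (Fin n → ℝ) → Fin n → Fin n → Fin n → ℝ}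
  {f e : (Fin n → ℝ) → ℝ}

lemma curvhat (hU : IsOpen U)
    (hΓtf : ∀ x a b c, Γ x a b c = Γ x c b a)
    (hΓsm : ∀ a b c, ContDiffOn ℝ (⊤ : ℕ∞) (fun x => Γ x a b c) U)
    (hf : ContDiffOn ℝ (⊤ : ℕ∞) f U)
    (hproj : ∀ x a b c,
      Γhat x a b c = Γ x a b c + pd f a x * kron c b + kron a b * pd f c x) :
    ∀ x ∈ U, ∀ a b c d, curv Γhat x a b c d
      = curv Γ x a b c d + kron b c * Tt Γ f x a d - kron a c * Tt Γ f x b d := by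
  intro x hx a b c d
  have hdf : ∀ p, DifferentiableAt ℝ (fun y => pd f p y) x := fun p =>
    diffAt hU (contDiffOn_pd hU hf p) hx
  have hdΓ : ∀ p q r, DifferentiableAt ℝ (fun y => Γ y p q r) x := fun p q r =>
    diffAt hU (hΓsm p q r) hx
  have hpd : ∀ p q r s, pd (fun y => Γhat y q r s) p x
      = pd (fun y => Γ y q r s) p x + pd (fun y => pd f q y) p x * kron s r
        + kron q r * pd (fun y => pd f s y) p x := by
    intro p q r s
    have he : (fun y => Γhat y q r s)
        = fun y => (Γ y q r s + pd f q y * kron s r) + kron q r * pd f s y :=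
      funext fun y => by rw [hproj]
    rw [he, pd_add ((hdΓ q r s).fun_add ((hdf q).mul_const _)) ((hdf s).const_mul _),
      pd_add (hdΓ q r s) ((hdf q).mul_const _), pd_mul_const (hdf q), pd_const_mul (hdf s)]
  have hsum1 : ∑ i, Γhat x a c i * Γhat x b i d
      = (∑ i, Γ x a c i * Γ x b i d) + Γ x a c d * pd f b x + Γ x a c b * pd f d x
        + Γ x b c d * pd f a x + pd f a x * pd f b x * kron d c
        + pd f a x * pd f d x * kron b c
        + kron a c * (∑ i, pd f i x * Γ x b i d) + kron a c * (pd f d x * pd f b x)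
        + kron a c * (pd f b x * pd f d x) := by
    rw [Finset.sum_congr rfl fun i _ => by rw [hproj x a c i, hproj x b i d]]
    exact quad (fun i => Γ x a c i) (fun i => Γ x b i d) (fun i => pd f i x)
      (pd f a x) (pd f b x) a b c d
  have hsum2 : ∑ i, Γhat x b c i * Γhat x a i d
      = (∑ i, Γ x b c i * Γ x a i d) + Γ x b c d * pd f a x + Γ x b c a * pd f d x
        + Γ x a c d * pd f b x + pd f b x * pd f a x * kron d c
        + pd f b x * pd f d x * kron a c
        + kron b c * (∑ i, pd f i x * Γ x a i d) + kron b c * (pd f d x * pd f a x)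
        + kron b c * (pd f a x * pd f d x) := by
    rw [Finset.sum_congr rfl fun i _ => by rw [hproj x b c i, hproj x a i d]]
    exact quad (fun i => Γ x b c i) (fun i => Γ x a i d) (fun i => pd f i x)
      (pd f b x) (pd f a x) b a c d
  simp only [curv, Tt]
  rw [hpd a b c d, hpd b a c d, hsum1, hsum2, pd_comm hU hf hx a b, hΓtf x a c b]
  ring

lemma riccihat (hn : 2 ≤ n) (hU : IsOpen U)
    (hΓtf : ∀ x a b c, Γ x a b c = Γ x c b a)
    (hΓsm : ∀ a b c, ContDiffOn ℝ (⊤ : ℕ∞) (fun x => Γ x a b c) U)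
    (hf : ContDiffOn ℝ (⊤ : ℕ∞) f U)
    (hproj : ∀ x a b c,
      Γhat x a b c = Γ x a b c + pd f a x * kron c b + kron a b * pd f c x) :
    ∀ x ∈ U, ∀ a d, ricci Γhat x a d = ricci Γ x a d - ((n:ℝ) - 1) * Tt Γ f x a d := by
  intro x hx a d
  simp only [ricci]
  rw [Finset.sum_congr rfl fun b _ => curvhat hU hΓtf hΓsm hf hproj x hx b a b d]
  simp only [kron_diag, one_mul]
  rw [Finset.sum_sub_distrib, Finset.sum_add_distrib, sum_kron_left (fun b => Tt Γ f x b d) a,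
    Finset.sum_const, Finset.card_univ, Fintype.card_fin, nsmul_eq_mul]
  ring

lemma projPhat (hn : 2 ≤ n) (hU : IsOpen U)
    (hΓtf : ∀ x a b c, Γ x a b c = Γ x c b a)
    (hΓsm : ∀ a b c, ContDiffOn ℝ (⊤ : ℕ∞) (fun x => Γ x a b c) U)
    (hf : ContDiffOn ℝ (⊤ : ℕ∞) f U)
    (hproj : ∀ x a b c,
      Γhat x a b c = Γ x a b c + pd f a x * kron c b + kron a b * pd f c x) :
    ∀ x ∈ U, ∀ a b, projP Γhat x a b = projP Γ x a b - Tt Γ f x a b := by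
  intro x hx a b
  have hn1 : ((n:ℝ) - 1) ≠ 0 := by
    have : (2:ℝ) ≤ (n:ℝ) := by exact_mod_cast hn
    linarith
  simp only [projP]
  rw [riccihat hn hU hΓtf hΓsm hf hproj x hx a b]
  field_simp

lemma ric_symm (hU : IsOpen U)
    (hΓtf : ∀ x a b c, Γ x a b c = Γ x c b a)
    (hΓsm : ∀ a b c, ContDiffOn ℝ (⊤ : ℕ∞) (fun x => Γ x a b c) U)
    (hesm : ContDiffOn ℝ (⊤ : ℕ∞) e U) (hepos : ∀ x ∈ U, 0 < e x)
    (hspecial : ∀ x ∈ U, ∀ a, pd e a x = (∑ b, Γ x a b b) * e x) :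
    ∀ x ∈ U, ∀ a d, ricci Γ x a d = ricci Γ x d a := by
  intro x hx a d
  have hdΓ : ∀ p q r, DifferentiableAt ℝ (fun y => Γ y p q r) x := fun p q r =>
    diffAt hU (hΓsm p q r) hx
  have hγsm : ∀ p, ContDiffOn ℝ (⊤ : ℕ∞) (fun y => ∑ b, Γ y p b b) U := fun p =>
    ContDiffOn.sum fun b _ => hΓsm p b b
  have hex : e x ≠ 0 := ne_of_gt (hepos x hx)
  have key : ∀ p q, pd (fun y => ∑ b, Γ y p b b) q x = pd (fun y => ∑ b, Γ y q b b) p x := by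
    intro p q
    have h2 : ∀ r s, pd (fun y => (∑ b, Γ y r b b) * e y) s x = pd (fun y => pd e r y) s x :=
      fun r s => pd_congr hU hx (fun y hy => (hspecial y hy r).symm) s
    have h3 : ∀ r s, pd (fun y => (∑ b, Γ y r b b) * e y) s x
        = pd (fun y => ∑ b, Γ y r b b) s x * e x + (∑ b, Γ x r b b) * pd e s x := fun r s =>
      pd_mul (diffAt hU (hγsm r) hx) (diffAt hU hesm hx) s
    have h4 : pd (fun y => pd e p y) q x = pd (fun y => pd e q y) p x :=
      pd_comm hU hesm hx q p
    have hkey := (h3 p q).symm.trans ((h2 p q).trans (h4.trans ((h2 q p).symm.trans (h3 q p))))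
    rw [hspecial x hx p, hspecial x hx q] at hkey
    apply mul_right_cancel₀ hex
    linear_combination hkey
  simp only [ricci, curv]
  simp only [Finset.sum_add_distrib, Finset.sum_sub_distrib]
  have T1 : ∑ b, pd (fun y => Γ y a b d) b x = ∑ b, pd (fun y => Γ y d b a) b x :=
    Finset.sum_congr rfl fun b _ => by
      rw [show (fun y => Γ y a b d) = (fun y => Γ y d b a) from funext fun y => hΓtf y a b d]
  have T2 : ∀ p q : Fin n, ∑ b, pd (fun y => Γ y b b p) q x
      = pd (fun y => ∑ b, Γ y p b b) q x := by
    intro p q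
    rw [← pd_sum (fun b _ => hdΓ b b p) q]
    exact pd_congr hU hx (fun y _ => Finset.sum_congr rfl fun b _ => hΓtf y b b p) q
  have T3 : ∑ b, ∑ i, Γ x b b i * Γ x a i d = ∑ b, ∑ i, Γ x b b i * Γ x d i a :=
    Finset.sum_congr rfl fun b _ => Finset.sum_congr rfl fun i _ => by rw [hΓtf x a i d]
  have T4 : ∑ b, ∑ i, Γ x d b i * Γ x b i a = ∑ b, ∑ i, Γ x a b i * Γ x b i d := by
    rw [Finset.sum_comm]
    refine Finset.sum_congr rfl fun p _ => Finset.sum_congr rfl fun q _ => ?_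
    rw [hΓtf x a p q, hΓtf x p q d]
    ring
  rw [T1, T2 d a, T2 a d, key d a, T3, T4]

lemma projP_symm (hU : IsOpen U)
    (hΓtf : ∀ x a b c, Γ x a b c = Γ x c b a)
    (hΓsm : ∀ a b c, ContDiffOn ℝ (⊤ : ℕ∞) (fun x => Γ x a b c) U)
    (hesm : ContDiffOn ℝ (⊤ : ℕ∞) e U) (hepos : ∀ x ∈ U, 0 < e x)
    (hspecial : ∀ x ∈ U, ∀ a, pd e a x = (∑ b, Γ x a b b) * e x) :
    ∀ x ∈ U, ∀ a b, projP Γ x a b = projP Γ x b a := by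
  intro x hx a b
  simp only [projP]
  rw [ric_symm hU hΓtf hΓsm hesm hepos hspecial x hx a b]

end main2
section main3
variable {n : ℕ} {U : Set (Fin n → ℝ)}
  {Γ Γhat : (Fin n → ℝ) → Fin n → Fin n → Fin n → ℝ}
  {f e : (Fin n → ℝ) → ℝ}

lemma pdT_eq (hU : IsOpen U)
    (hΓsm : ∀ a b c, ContDiffOn ℝ (⊤ : ℕ∞) (fun x => Γ x a b c) U)
    (hf : ContDiffOn ℝ (⊤ : ℕ∞) f U) :
    ∀ x ∈ U, ∀ a b c, pd (fun y => Tt Γ f y b c) a x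
      = pd (fun y => pd (fun z => pd f c z) b y) a x
        - (∑ i, (pd (fun y => pd f i y) a x * Γ x b i c
            + pd f i x * pd (fun y => Γ y b i c) a x))
        - (pd (fun y => pd f b y) a x * pd f c x + pd f b x * pd (fun y => pd f c y) a x) := by
  intro x hx a b c
  have hdf : ∀ p, DifferentiableAt ℝ (fun y => pd f p y) x := fun p =>
    diffAt hU (contDiffOn_pd hU hf p) hx
  have hdΓ : ∀ p q r, DifferentiableAt ℝ (fun y => Γ y p q r) x := fun p q r =>
    diffAt hU (hΓsm p q r) hx
  have hA : DifferentiableAt ℝ (fun y => pd (fun z => pd f c z) b y) x :=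
    diffAt hU (contDiffOn_pd hU (contDiffOn_pd hU hf c) b) hx
  have hB : DifferentiableAt ℝ (fun y => ∑ i, pd f i y * Γ y b i c) x :=
    diffAt hU (ContDiffOn.sum fun i _ => (contDiffOn_pd hU hf i).mul (hΓsm b i c)) hx
  have hC : DifferentiableAt ℝ (fun y => pd f b y * pd f c y) x := (hdf b).mul (hdf c)
  have he : (fun y => Tt Γ f y b c)
      = fun y => (pd (fun z => pd f c z) b y - ∑ i, pd f i y * Γ y b i c)
          - pd f b y * pd f c y := funext fun y => rfl
  rw [he, pd_sub (hA.fun_sub hB) hC, pd_sub hA hB,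
    pd_sum (fun i _ => (hdf i).fun_mul (hdΓ b i c)) a,
    Finset.sum_congr rfl fun i _ => pd_mul (hdf i) (hdΓ b i c) a,
    pd_mul (hdf b) (hdf c) a]

lemma nablaPhat_eq (hn : 2 ≤ n) (hU : IsOpen U)
    (hΓtf : ∀ x a b c, Γ x a b c = Γ x c b a)
    (hΓsm : ∀ a b c, ContDiffOn ℝ (⊤ : ℕ∞) (fun x => Γ x a b c) U)
    (hf : ContDiffOn ℝ (⊤ : ℕ∞) f U)
    (hproj : ∀ x a b c,
      Γhat x a b c = Γ x a b c + pd f a x * kron c b + kron a b * pd f c x) :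
    ∀ x ∈ U, ∀ a b c, nablaP Γhat x a b c
      = nablaP Γ x a b c - pd (fun y => Tt Γ f y b c) a x
        + (∑ d, Γ x a d b * Tt Γ f x d c) + (∑ d, Γ x a d c * Tt Γ f x b d)
        - 2 * pd f a x * (projP Γ x b c - Tt Γ f x b c)
        - pd f b x * (projP Γ x a c - Tt Γ f x a c)
        - pd f c x * (projP Γ x b a - Tt Γ f x b a) := by
  intro x hx a b c
  have hP := projPhat hn hU hΓtf hΓsm hf hproj
  have hpdP : pd (fun y => projP Γhat y b c) a x
      = pd (fun y => projP Γ y b c) a x - pd (fun y => Tt Γ f y b c) a x := by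
    rw [pd_congr hU hx (fun y hy => hP y hy b c) a,
      pd_sub (diffAt hU (contDiffOn_projP hU hΓsm b c) hx)
        (diffAt hU (contDiffOn_Tt hU hΓsm hf b c) hx)]
  have hS1 : ∑ d, Γhat x a d b * projP Γhat x d c
      = (∑ d, Γ x a d b * (projP Γ x d c - Tt Γ f x d c))
        + pd f a x * (projP Γ x b c - Tt Γ f x b c)
        + pd f b x * (projP Γ x a c - Tt Γ f x a c) := by
    rw [Finset.sum_congr rfl fun d _ => by rw [hproj x a d b, hP x hx d c]]
    exact lin (fun d => Γ x a d b) (fun d => projP Γ x d c - Tt Γ f x d c)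
      (pd f a x) (pd f b x) a b
  have hS2 : ∑ d, Γhat x a d c * projP Γhat x b d
      = (∑ d, Γ x a d c * (projP Γ x b d - Tt Γ f x b d))
        + pd f a x * (projP Γ x b c - Tt Γ f x b c)
        + pd f c x * (projP Γ x b a - Tt Γ f x b a) := by
    rw [Finset.sum_congr rfl fun d _ => by rw [hproj x a d c, hP x hx b d]]
    exact lin (fun d => Γ x a d c) (fun d => projP Γ x b d - Tt Γ f x b d)
      (pd f a x) (pd f c x) a c
  have hsplit1 : (∑ d, Γ x a d b * (projP Γ x d c - Tt Γ f x d c))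
      = (∑ d, Γ x a d b * projP Γ x d c) - (∑ d, Γ x a d b * Tt Γ f x d c) := by
    rw [← Finset.sum_sub_distrib]
    exact Finset.sum_congr rfl fun d _ => mul_sub _ _ _
  have hsplit2 : (∑ d, Γ x a d c * (projP Γ x b d - Tt Γ f x b d))
      = (∑ d, Γ x a d c * projP Γ x b d) - (∑ d, Γ x a d c * Tt Γ f x b d) := by
    rw [← Finset.sum_sub_distrib]
    exact Finset.sum_congr rfl fun d _ => mul_sub _ _ _
  simp only [nablaP]
  rw [hpdP, hS1, hS2, hsplit1, hsplit2]
  ring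

end main3
/-- transformation of the Cotton–York tensor under projective
change `Γ̂ = Γ + (df)δ + δ(df)` of a special connection:
`Ŷ_{abc} = Y_{abc} + ½ W_{ab}{}^d{}_c Υ_d` with `Υ = df`. -/
theorem cotton_york_transformation
    {n : ℕ} (hn : 2 ≤ n) (U : Set (Fin n → ℝ)) (hU : IsOpen U)
    (Γ Γhat : (Fin n → ℝ) → Fin n → Fin n → Fin n → ℝ)
    (hΓtf : ∀ x a b c, Γ x a b c = Γ x c b a)
    (hΓsm : ∀ a b c, ContDiffOn ℝ (⊤ : ℕ∞) (fun x => Γ x a b c) U)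
    (e : (Fin n → ℝ) → ℝ) (hesm : ContDiffOn ℝ (⊤ : ℕ∞) e U)
    (hepos : ∀ x ∈ U, 0 < e x)
    (hspecial : ∀ x ∈ U, ∀ a, pd e a x = (∑ b, Γ x a b b) * e x)
    (f : (Fin n → ℝ) → ℝ) (hf : ContDiffOn ℝ (⊤ : ℕ∞) f U)
    (hproj : ∀ x a b c,
      Γhat x a b c = Γ x a b c + pd f a x * kron c b + kron a b * pd f c x) :
    ∀ x ∈ U, ∀ a b c,
      cottonY Γhat x a b c
        = cottonY Γ x a b c + (1/2) * ∑ d, projW Γ x a b d c * pd f d x := by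
  intro x hx a b c
  have hps := projP_symm hU hΓtf hΓsm hesm hepos hspecial
  have hW : ∑ d, projW Γ x a b d c * pd f d x
      = ∑ d, (pd (fun y => Γ y b d c) a x - pd (fun y => Γ y a d c) b x
          + (∑ i, Γ x a d i * Γ x b i c) - (∑ i, Γ x b d i * Γ x a i c)
          - kron a d * projP Γ x b c + kron b d * projP Γ x a c) * pd f d x :=
    Finset.sum_congr rfl fun d _ => by simp only [projW, curv]
  have KA := key_algebra (Γ x) (fun p q r s => pd (fun y => Γ y q r s) p x)
      (fun p => pd f p x) (fun p q => pd (fun y => pd f q y) p x)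
      (fun p q r => pd (fun y => pd (fun z => pd f r z) q y) p x)
      (fun p q => projP Γ x p q) (fun p q => Tt Γ f x p q)
      (fun p q r => pd (fun y => Tt Γ f y q r) p x)
      (fun p q r => hΓtf x p q r)
      (fun p q => pd_comm hU hf hx p q)
      (fun p q r => pd_comm hU (contDiffOn_pd hU hf r) hx p q)
      (fun p q => hps x hx p q)
      (fun p q => rfl)
      (fun p q r => pdT_eq hU hΓsm hf x hx p q r)
      a b c
  simp only [cottonY]
  rw [nablaPhat_eq hn hU hΓtf hΓsm hf hproj x hx a b c,
    nablaPhat_eq hn hU hΓtf hΓsm hf hproj x hx b a c, hW]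
  linear_combination KA / 2
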